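/- Symbol-count lower bound: let n ≥ 2 and let M be a natural number such that every trifferent code of length n−1 has cardinality at most M. Then for every trifferent code C ⊆ {0,1,2}^n and every symbol a ∈ {0,1,2}, the number of elements of C whose first coordinate equals a is at least |C| − M. -/

import Mathlib

def Trifferent {n : ℕ} (C : Finset (Fin n → Fin 3)) : Prop :=
  ∀ x ∈ C, ∀ y ∈ C, ∀ z ∈ C, x ≠ y → x ≠ z → y ≠ z →
    ∃ i : Fin n, x i ≠ y i ∧ x i ≠ z i ∧ y i ≠ z i

/-! The words of `C` whose first symbol is not `a` use only two symbols there, so no three of them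
are separated in the first coordinate: they form a trifferent code after deleting it, unless two of
them share their tail, in which case there are at most two of them, while any two words of length
`n - 1 ≥ 1` already form a trifferent code. Either way there are at most `M` of them. -/

theorem fin_three_eq_of_ne_of_ne {a u v w : Fin 3} (hu : u ≠ a) (hv : v ≠ a) (hw : w ≠ a)
    (huv : u ≠ v) (huw : u ≠ w) : v = w := by
  omega

namespace Trifferent

variable {m : ℕ}

theorem mono {C D : Finset (Fin m → Fin 3)} (hC : Trifferent C) (hDC : D ⊆ C) : Trifferent D :=
  fun x hx y hy z hz => hC x (hDC hx) y (hDC hy) z (hDC hz)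

theorem of_card_le_two {C : Finset (Fin m → Fin 3)} (hC : C.card ≤ 2) : Trifferent C := by
  intro x hx y hy z hz hxy hxz hyz
  have : ({x, y, z} : Finset _).card ≤ 2 := (Finset.card_le_card (by grind)).trans hC
  simp [Finset.card_insert_of_notMem, hxy, hxz, hyz] at this

theorem two_le_of_forall_card_le (hm : 0 < m) {M : ℕ}
    (hM : ∀ C : Finset (Fin m → Fin 3), Trifferent C → C.card ≤ M) : 2 ≤ M := by
  have hcard : 2 ≤ (Finset.univ : Finset (Fin m → Fin 3)).card := by
    simpa using Nat.le_self_pow hm.ne' 3 |>.trans' (by norm_num)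
  obtain ⟨C, -, hC⟩ := Finset.exists_subset_card_eq hcard
  exact hC ▸ hM C (of_card_le_two hC.le)

variable {C : Finset (Fin (m + 1) → Fin 3)} {a : Fin 3}

theorem exists_tail_separating (hC : Trifferent C) (ha : ∀ x ∈ C, x 0 ≠ a)
    {x y z : Fin (m + 1) → Fin 3} (hx : x ∈ C) (hy : y ∈ C) (hz : z ∈ C)
    (hxy : x ≠ y) (hxz : x ≠ z) (hyz : y ≠ z) :
    ∃ j : Fin m, Fin.tail x j ≠ Fin.tail y j ∧ Fin.tail x j ≠ Fin.tail z j ∧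
      Fin.tail y j ≠ Fin.tail z j := by
  obtain ⟨i, hixy, hixz, hiyz⟩ := hC x hx y hy z hz hxy hxz hyz
  cases i using Fin.cases with
  | zero => exact absurd (fin_three_eq_of_ne_of_ne (ha x hx) (ha y hy) (ha z hz) hixy hixz) hiyz
  | succ j => exact ⟨j, hixy, hixz, hiyz⟩

theorem image_tail (hC : Trifferent C) (ha : ∀ x ∈ C, x 0 ≠ a) :
    Trifferent (C.image Fin.tail) := by
  simp only [Trifferent, Finset.forall_mem_image]
  intro x hx y hy z hz hxy hxz hyz
  exact hC.exists_tail_separating ha hx hy hz (ne_of_apply_ne _ hxy) (ne_of_apply_ne _ hxz)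
    (ne_of_apply_ne _ hyz)

theorem subset_pair_of_tail_eq (hC : Trifferent C) (ha : ∀ x ∈ C, x 0 ≠ a)
    {x y : Fin (m + 1) → Fin 3} (hx : x ∈ C) (hy : y ∈ C) (hxy : x ≠ y)
    (htail : Fin.tail x = Fin.tail y) : C ⊆ {x, y} := by
  intro z hz
  by_contra hzxy
  simp only [Finset.mem_insert, Finset.mem_singleton, not_or] at hzxy
  obtain ⟨j, hj, -⟩ := hC.exists_tail_separating ha hx hy hz hxy (Ne.symm hzxy.1) (Ne.symm hzxy.2)
  exact hj (congrFun htail j)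

theorem card_le_of_apply_zero_ne (hm : 0 < m) {M : ℕ}
    (hM : ∀ C : Finset (Fin m → Fin 3), Trifferent C → C.card ≤ M)
    (hC : Trifferent C) (ha : ∀ x ∈ C, x 0 ≠ a) : C.card ≤ M := by
  by_cases hinj : Set.InjOn Fin.tail (C : Set (Fin (m + 1) → Fin 3))
  · rw [← Finset.card_image_of_injOn hinj]
    exact hM _ (hC.image_tail ha)
  · obtain ⟨x, hx, y, hy, htail, hxy⟩ : ∃ x ∈ C, ∃ y ∈ C, Fin.tail x = Fin.tail y ∧ x ≠ y := by
      simpa [Set.InjOn] using hinj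
    calc C.card ≤ ({x, y} : Finset _).card :=
          Finset.card_le_card (hC.subset_pair_of_tail_eq ha hx hy hxy htail)
      _ ≤ 2 := Finset.card_le_two
      _ ≤ M := two_le_of_forall_card_le hm hM

end Trifferent

theorem trifferent_symbol_count_lower_bound
    (n : ℕ) (hn : 2 ≤ n) (M : ℕ)
    (hM : ∀ C : Finset (Fin (n - 1) → Fin 3), Trifferent C → C.card ≤ M)
    (C : Finset (Fin n → Fin 3)) (hC : Trifferent C)
    (a : Fin 3) :
    C.card - M ≤ (C.filter fun x => x ⟨0, by omega⟩ = a).card := by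
  obtain ⟨m, rfl⟩ : ∃ m, n = m + 1 := ⟨n - 1, by omega⟩
  rw [Nat.add_sub_cancel] at hM
  have hrest : (C.filter fun x => ¬x 0 = a).card ≤ M :=
    Trifferent.card_le_of_apply_zero_ne (by omega) hM (hC.mono (Finset.filter_subset _ _))
      fun x hx => (Finset.mem_filter.mp hx).2
  have hsplit := Finset.card_filter_add_card_filter_not (s := C) fun x => x 0 = a
  change C.card - M ≤ (C.filter fun x => x 0 = a).card
  omega
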